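/- arXiv:1412.3068 — 3 statements merged into one kernel-verified Lean document; each statement's English description precedes it below -/
import Mathlib

section
/- Let L be a Lie algebra of a set-arrangement 𝒜 on X and let ℬ be a closed sub-arrangement of 𝒜. If [x, im(s_ℬ')] = 0 for all x ∈ X \ supp(ℬ), then [ker(π_ℬ'), im(s_ℬ')] = 0 and L' is the direct product of the ideals im(s_ℬ') and ker(π_ℬ'), i.e., L' = im(s_ℬ') ⊕ ker(π_ℬ') as a direct sum of mutually commuting Lie ideals. -/
open FreeLieAlgebra

/-- A set-arrangement on `X`: every member has at least two elements, two distinct members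
meet in at most one element, and the union of all members is `X`. -/
def IsSetArrangement {X : Type*} (𝒜 : Set (Set X)) : Prop :=
  (∀ A ∈ 𝒜, 2 ≤ A.ncard) ∧
    (∀ A ∈ 𝒜, ∀ B ∈ 𝒜, A ≠ B → (A ∩ B).Subsingleton) ∧
    ⋃₀ 𝒜 = Set.univ

variable (C : Type*) [CommRing C] {X : Type*}

/-- The inclusion `F(A) → F(X)` of free Lie algebras. -/
noncomputable def inclX (A : Set X) : FreeLieAlgebra C A →ₗ⁅C⁆ FreeLieAlgebra C X :=
  FreeLieAlgebra.lift C fun a => FreeLieAlgebra.of C (a : X)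

/-- The inclusion `F(A) → F(S)` of free Lie algebras along `A ⊆ S`. -/
noncomputable def inclSub {A S : Set X} (h : A ⊆ S) :
    FreeLieAlgebra C A →ₗ⁅C⁆ FreeLieAlgebra C S :=
  FreeLieAlgebra.lift C fun a => FreeLieAlgebra.of C (⟨a.1, h a.2⟩ : S)

/-- Admissibility of the relations: `R_A ⊆ [F(A), F(A)]`. -/
def AdmissibleRel (𝒜 : Set (Set X)) (Rel : ∀ A : Set X, Set (FreeLieAlgebra C A)) : Prop :=
  ∀ A ∈ 𝒜, Rel A ⊆ (LieAlgebra.derivedSeries C (FreeLieAlgebra C A) 1 : Set (FreeLieAlgebra C A))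

/-- The defining ideal of a Lie algebra of a set-arrangement: generated by all `⁅x,y⁆` for
pairs not contained in any member of `𝒜`, together with the relations `R_A`, `A ∈ 𝒜`. -/
noncomputable def definingIdeal (𝒜 : Set (Set X)) (Rel : ∀ A : Set X, Set (FreeLieAlgebra C A)) :
    LieIdeal C (FreeLieAlgebra C X) :=
  LieSubmodule.lieSpan C (FreeLieAlgebra C X)
    ({z | ∃ x y : X, (∀ A ∈ 𝒜, ¬({x, y} : Set X) ⊆ A) ∧ z = ⁅of C x, of C y⁆} ∪
      ⋃ A, ⋃ (_ : A ∈ 𝒜), inclX C A '' Rel A)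

/-- The Lie algebra `L` of the set-arrangement `𝒜` with relations `Rel`. -/
noncomputable abbrev ArrLie (𝒜 : Set (Set X)) (Rel : ∀ A : Set X, Set (FreeLieAlgebra C A)) :=
  FreeLieAlgebra C X ⧸ definingIdeal C 𝒜 Rel

/-- The quotient map `F(X) → L`. -/
noncomputable def arrMk (𝒜 : Set (Set X)) (Rel : ∀ A : Set X, Set (FreeLieAlgebra C A)) :
    FreeLieAlgebra C X → ArrLie C 𝒜 Rel :=
  LieSubmodule.Quotient.mk (N := definingIdeal C 𝒜 Rel)

/-- The ideal `⟨R_A⟩` of `F(A)`. -/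
noncomputable def locIdeal (A : Set X) (Rel : ∀ A : Set X, Set (FreeLieAlgebra C A)) :
    LieIdeal C (FreeLieAlgebra C A) :=
  LieSubmodule.lieSpan C (FreeLieAlgebra C A) (Rel A)

/-- The localized Lie algebra `L_A = F(A)/⟨R_A⟩`. -/
noncomputable abbrev LocLie (A : Set X) (Rel : ∀ A : Set X, Set (FreeLieAlgebra C A)) :=
  FreeLieAlgebra C A ⧸ locIdeal C A Rel

/-- The quotient map `F(A) → L_A`. -/
noncomputable def locMk (A : Set X) (Rel : ∀ A : Set X, Set (FreeLieAlgebra C A)) :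
    FreeLieAlgebra C A → LocLie C A Rel :=
  LieSubmodule.Quotient.mk (N := locIdeal C A Rel)

open Classical in
/-- The canonical Lie algebra map `F(X) → L_A` killing the generators outside `A`. -/
noncomputable def locProj (A : Set X) (Rel : ∀ A : Set X, Set (FreeLieAlgebra C A)) :
    FreeLieAlgebra C X →ₗ⁅C⁆ LocLie C A Rel :=
  FreeLieAlgebra.lift C fun x : X =>
    if h : x ∈ A then locMk C A Rel (of C (⟨x, h⟩ : A)) else 0

/-- The replacement condition. -/
def ReplacementCond (𝒜 : Set (Set X)) (Rel : ∀ A : Set X, Set (FreeLieAlgebra C A)) : Prop :=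
  ∀ A ∈ 𝒜, 3 ≤ A.ncard → ∀ x ∈ A, (∃ B ∈ 𝒜, B ≠ A ∧ x ∈ B) →
    (LieAlgebra.derivedSeries C (LocLie C A Rel) 1 : Set (LocLie C A Rel)) ⊆
      (LieSubalgebra.lieSpan C (LocLie C A Rel)
        {z | ∃ a : A, (a : X) ≠ x ∧ z = locMk C A Rel (of C a)} : Set (LocLie C A Rel))

/-- Lie monomials of weight `n` with respect to a weighting `d` of the generators. -/
inductive IsLieMonomial (d : X → ℕ) : FreeLieAlgebra C X → ℕ → Prop
  | of (x : X) : IsLieMonomial d (of C x) (d x)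
  | lie {u v : FreeLieAlgebra C X} {m n : ℕ} :
      IsLieMonomial d u m → IsLieMonomial d v n → IsLieMonomial d ⁅u, v⁆ (m + n)

/-- Homogeneity of an element of the free Lie algebra with respect to a weighting. -/
def IsHomogeneous (d : X → ℕ) (r : FreeLieAlgebra C X) : Prop :=
  ∃ n : ℕ, r ∈ Submodule.span C {u | IsLieMonomial C d u n}

/-- The support of a sub-arrangement. -/
def arrSupp {X : Type*} (ℬ : Set (Set X)) : Set X := ⋃₀ ℬ

/-- `ℬ` is a closed sub-arrangement of `𝒜`. -/
def IsClosedSub {X : Type*} (𝒜 ℬ : Set (Set X)) : Prop :=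
  ℬ ⊆ 𝒜 ∧ ∀ A ∈ 𝒜, A ∉ ℬ → (A ∩ arrSupp ℬ).Subsingleton

/-- The relations `R_ℬ` of a sub-arrangement. -/
noncomputable def subRel (ℬ : Set (Set X)) (Rel : ∀ A : Set X, Set (FreeLieAlgebra C A)) :
    Set (FreeLieAlgebra C (arrSupp ℬ)) :=
  (⋃ B, ⋃ h : B ∈ ℬ, inclSub C (Set.subset_sUnion_of_mem h) '' Rel B) ∪
    {z | ∃ x y : arrSupp ℬ, (∀ B ∈ ℬ, ¬({(x : X), (y : X)} : Set X) ⊆ B) ∧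
      z = ⁅of C x, of C y⁆}

/-- The ideal `⟨R_ℬ⟩` of `F(supp ℬ)`. -/
noncomputable def subIdeal (ℬ : Set (Set X)) (Rel : ∀ A : Set X, Set (FreeLieAlgebra C A)) :
    LieIdeal C (FreeLieAlgebra C (arrSupp ℬ)) :=
  LieSubmodule.lieSpan C (FreeLieAlgebra C (arrSupp ℬ)) (subRel C ℬ Rel)

/-- The localized Lie algebra `L_ℬ` at a sub-arrangement. -/
noncomputable abbrev SubLie (ℬ : Set (Set X)) (Rel : ∀ A : Set X, Set (FreeLieAlgebra C A)) :=
  FreeLieAlgebra C (arrSupp ℬ) ⧸ subIdeal C ℬ Rel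

/-- The quotient map `F(supp ℬ) → L_ℬ`. -/
noncomputable def subMk (ℬ : Set (Set X)) (Rel : ∀ A : Set X, Set (FreeLieAlgebra C A)) :
    FreeLieAlgebra C (arrSupp ℬ) → SubLie C ℬ Rel :=
  LieSubmodule.Quotient.mk (N := subIdeal C ℬ Rel)

open Classical in
/-- The canonical Lie algebra map `F(X) → L_ℬ` killing the generators outside `supp ℬ`. -/
noncomputable def subProj (ℬ : Set (Set X)) (Rel : ∀ A : Set X, Set (FreeLieAlgebra C A)) :
    FreeLieAlgebra C X →ₗ⁅C⁆ SubLie C ℬ Rel :=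
  FreeLieAlgebra.lift C fun x : X =>
    if h : x ∈ arrSupp ℬ then subMk C ℬ Rel (of C (⟨x, h⟩ : arrSupp ℬ)) else 0

/-!
The generators of `L` lying in `supp ℬ` are in the image of `s_ℬ`, and those outside are killed
by `π_ℬ` and, by hypothesis, commute with `im(s_ℬ')`. Hence every generator `z` satisfies
`⁅z, s r⁆ = s ⁅π z, r⁆` for `r ∈ L_ℬ'`; the elements with this property form a Lie subalgebra,
so every element of `L` has it. For `z ∈ ker π_ℬ` this gives `[ker(π_ℬ'), im(s_ℬ')] = 0`, and
it shows that `im(s_ℬ')` is an ideal. The rest is the splitting `w = s(π w) + (w - s(π w))` for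
the retraction `π_ℬ ∘ s_ℬ = id`, which holds because both sides agree on generators.
-/

namespace LieIdeal

variable {R L : Type*} [CommRing R] [LieRing L] [LieAlgebra R L]

def quotientMk (I : LieIdeal R L) : L →ₗ⁅R⁆ L ⧸ I :=
  { (LieSubmodule.Quotient.mk' I : L →ₗ⁅R,L⁆ L ⧸ I).toLinearMap with
    map_lie' := fun {_ _} => rfl }

end LieIdeal

namespace FreeLieAlgebra

open LieIdeal

variable {R ι L : Type*} [CommRing R] [LieRing L] [LieAlgebra R L]
  {I : LieIdeal R (FreeLieAlgebra R ι)}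

lemma quotient_hom_ext {F₁ F₂ : FreeLieAlgebra R ι ⧸ I →ₗ⁅R⁆ L}
    (h : ∀ x, F₁ (quotientMk I (of R x)) = F₂ (quotientMk I (of R x))) : F₁ = F₂ := by
  have hcomp : F₁.comp (quotientMk I) = F₂.comp (quotientMk I) := hom_ext h
  ext z
  obtain ⟨w, rfl⟩ := Submodule.Quotient.mk_surjective (I : Submodule R (FreeLieAlgebra R ι)) z
  exact LieHom.congr_fun hcomp w

lemma quotient_lieSubalgebra_eq_top {K : LieSubalgebra R (FreeLieAlgebra R ι ⧸ I)}
    (hK : ∀ x, quotientMk I (of R x) ∈ K) : K = ⊤ := by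
  let g : FreeLieAlgebra R ι →ₗ⁅R⁆ K := lift R fun x => ⟨_, hK x⟩
  have hg : K.incl.comp g = quotientMk I := hom_ext fun x => by simp [g, lift_of_apply]
  refine eq_top_iff.mpr fun z _ => ?_
  obtain ⟨w, rfl⟩ := Submodule.Quotient.mk_surjective (I : Submodule R (FreeLieAlgebra R ι)) z
  change quotientMk I w ∈ K
  rw [← LieHom.congr_fun hg w]
  exact (g w).2

end FreeLieAlgebra

section Retraction

variable {R L M : Type*} [CommRing R] [LieRing L] [LieAlgebra R L] [LieRing M] [LieAlgebra R M]
  (s : M →ₗ⁅R⁆ L) (π : L →ₗ⁅R⁆ M) (D : LieIdeal R M)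

def bracketCompatible : LieSubalgebra R L where
  carrier := {z | ∀ r ∈ D, ⁅z, s r⁆ = s ⁅π z, r⁆}
  zero_mem' := by simp
  add_mem' {a b} ha hb r hr := by
    rw [add_lie, ha r hr, hb r hr, map_add, add_lie, map_add]
  smul_mem' c a ha r hr := by
    rw [smul_lie, ha r hr, map_smul, smul_lie, map_smul]
  lie_mem' {a b} ha hb r hr := by
    rw [lie_lie, hb r hr, ha r hr, ha _ (D.lie_mem hr), hb _ (D.lie_mem hr), ← map_sub,
      π.map_lie, lie_lie]

variable {s π D}

lemma mem_bracketCompatible_iff {z : L} :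
    z ∈ bracketCompatible s π D ↔ ∀ r ∈ D, ⁅z, s r⁆ = s ⁅π z, r⁆ :=
  Iff.rfl

lemma apply_mem_bracketCompatible (hπs : ∀ m, π (s m) = m) (m : M) :
    s m ∈ bracketCompatible s π D := fun r _ => by
  rw [hπs, LieHom.map_lie]

lemma mem_bracketCompatible_of_map_eq_zero {z : L} (hz : π z = 0)
    (hzs : ∀ r ∈ D, ⁅z, s r⁆ = 0) : z ∈ bracketCompatible s π D := fun r hr => by
  rw [hzs r hr, hz, zero_lie, map_zero]

end Retraction

theorem statement12_general {C : Type*} [CommRing C] {X : Type*}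
    (𝒜 : Set (Set X)) (Rel : ∀ A : Set X, Set (FreeLieAlgebra C A))
    (ℬ : Set (Set X))
    (sB : SubLie C ℬ Rel →ₗ⁅C⁆ ArrLie C 𝒜 Rel)
    (hsB : ∀ a : arrSupp ℬ, sB (subMk C ℬ Rel (of C a)) = arrMk C 𝒜 Rel (of C (a : X)))
    (πB : ArrLie C 𝒜 Rel →ₗ⁅C⁆ SubLie C ℬ Rel)
    (hπB₁ : ∀ a : arrSupp ℬ, πB (arrMk C 𝒜 Rel (of C (a : X))) = subMk C ℬ Rel (of C a))
    (hπB₂ : ∀ x : X, x ∉ arrSupp ℬ → πB (arrMk C 𝒜 Rel (of C x)) = 0)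
    (hcomm : ∀ x : X, x ∉ arrSupp ℬ →
      ∀ r ∈ sB '' (LieAlgebra.derivedSeries C (SubLie C ℬ Rel) 1 : Set (SubLie C ℬ Rel)),
        ⁅arrMk C 𝒜 Rel (of C x), r⁆ = 0) :
    -- `[ker(π_ℬ'), im(s_ℬ')] = 0`
    (∀ u ∈ LieAlgebra.derivedSeries C (ArrLie C 𝒜 Rel) 1, πB u = 0 →
      ∀ r ∈ sB '' (LieAlgebra.derivedSeries C (SubLie C ℬ Rel) 1 : Set (SubLie C ℬ Rel)),
        ⁅u, r⁆ = 0) ∧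
    -- `L' = im(s_ℬ') + ker(π_ℬ')`
    (∀ w ∈ LieAlgebra.derivedSeries C (ArrLie C 𝒜 Rel) 1,
      ∃ r ∈ sB '' (LieAlgebra.derivedSeries C (SubLie C ℬ Rel) 1 : Set (SubLie C ℬ Rel)),
        ∃ u ∈ LieAlgebra.derivedSeries C (ArrLie C 𝒜 Rel) 1, πB u = 0 ∧ w = r + u) ∧
    -- `im(s_ℬ') ∩ ker(π_ℬ') = 0`
    (∀ w ∈ sB '' (LieAlgebra.derivedSeries C (SubLie C ℬ Rel) 1 : Set (SubLie C ℬ Rel)),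
      w ∈ LieAlgebra.derivedSeries C (ArrLie C 𝒜 Rel) 1 → πB w = 0 → w = 0) ∧
    -- `im(s_ℬ')` is a Lie ideal of `L'`
    (∀ w ∈ LieAlgebra.derivedSeries C (ArrLie C 𝒜 Rel) 1,
      ∀ r ∈ sB '' (LieAlgebra.derivedSeries C (SubLie C ℬ Rel) 1 : Set (SubLie C ℬ Rel)),
        ⁅w, r⁆ ∈ sB '' (LieAlgebra.derivedSeries C (SubLie C ℬ Rel) 1 : Set (SubLie C ℬ Rel))) ∧
    -- `ker(π_ℬ')` is a Lie ideal of `L'`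
    (∀ w ∈ LieAlgebra.derivedSeries C (ArrLie C 𝒜 Rel) 1,
      ∀ u ∈ LieAlgebra.derivedSeries C (ArrLie C 𝒜 Rel) 1, πB u = 0 →
        ⁅w, u⁆ ∈ LieAlgebra.derivedSeries C (ArrLie C 𝒜 Rel) 1 ∧ πB ⁅w, u⁆ = 0) := by
  set DS := LieAlgebra.derivedSeries C (SubLie C ℬ Rel) 1
  set DL := LieAlgebra.derivedSeries C (ArrLie C 𝒜 Rel) 1
  have hπs : ∀ z, πB (sB z) = z := LieHom.congr_fun (show πB.comp sB = LieHom.id from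
    FreeLieAlgebra.quotient_hom_ext fun a => (congrArg πB (hsB a)).trans (hπB₁ a))
  have htop : bracketCompatible sB πB DS = ⊤ := by
    refine FreeLieAlgebra.quotient_lieSubalgebra_eq_top fun x => ?_
    by_cases hx : x ∈ arrSupp ℬ
    · have hs := apply_mem_bracketCompatible (D := DS) hπs (subMk C ℬ Rel (of C ⟨x, hx⟩))
      rwa [hsB] at hs
    · exact mem_bracketCompatible_of_map_eq_zero (hπB₂ x hx) fun r hr => hcomm x hx _ ⟨r, hr, rfl⟩
  have key : ∀ z, ∀ r ∈ DS, ⁅z, sB r⁆ = sB ⁅πB z, r⁆ := fun z =>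
    mem_bracketCompatible_iff.mp (htop ▸ LieSubalgebra.mem_top z)
  have hsDS : ∀ r ∈ DS, sB r ∈ DL := fun r hr =>
    LieIdeal.derivedSeries_map_le 1 (LieIdeal.mem_map hr)
  have hπDL : ∀ w ∈ DL, πB w ∈ DS := fun w hw =>
    LieIdeal.derivedSeries_map_le 1 (LieIdeal.mem_map hw)
  refine ⟨?_, fun w hw => ?_, ?_, ?_, fun w _ u hu hker => ⟨DL.lie_mem hu, ?_⟩⟩
  · rintro u - hu _ ⟨r, hr, rfl⟩
    rw [key u r hr, hu, zero_lie, map_zero]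
  · refine ⟨sB (πB w), ⟨πB w, hπDL w hw, rfl⟩, w - sB (πB w),
      DL.sub_mem hw (hsDS _ (hπDL w hw)), by rw [map_sub, hπs, sub_self], by abel⟩
  · rintro _ ⟨r, -, rfl⟩ - hker
    rw [hπs] at hker
    rw [hker, map_zero]
  · rintro w - _ ⟨r, hr, rfl⟩
    exact ⟨⁅πB w, r⁆, DS.lie_mem hr, (key w r hr).symm⟩
  · rw [LieHom.map_lie, hker, lie_zero]

/-- If `[x, im(s_ℬ')] = 0` for all `x ∈ X \ supp ℬ`, then `[ker(π_ℬ'), im(s_ℬ')] = 0` and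
`L'` is the direct product of the ideals `im(s_ℬ')` and `ker(π_ℬ')`: every element of `L'`
decomposes as a sum, the intersection is trivial, and both are mutually commuting Lie ideals
of `L'`. -/
theorem statement12 {C : Type*} [CommRing C] {X : Type*} [Fintype X]
    (𝒜 : Set (Set X)) (Rel : ∀ A : Set X, Set (FreeLieAlgebra C A))
    (h𝒜 : IsSetArrangement 𝒜) (hRel : AdmissibleRel C 𝒜 Rel)
    (ℬ : Set (Set X)) (hℬ : IsClosedSub 𝒜 ℬ)
    (sB : SubLie C ℬ Rel →ₗ⁅C⁆ ArrLie C 𝒜 Rel)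
    (hsB : ∀ a : arrSupp ℬ, sB (subMk C ℬ Rel (of C a)) = arrMk C 𝒜 Rel (of C (a : X)))
    (πB : ArrLie C 𝒜 Rel →ₗ⁅C⁆ SubLie C ℬ Rel)
    (hπB₁ : ∀ a : arrSupp ℬ, πB (arrMk C 𝒜 Rel (of C (a : X))) = subMk C ℬ Rel (of C a))
    (hπB₂ : ∀ x : X, x ∉ arrSupp ℬ → πB (arrMk C 𝒜 Rel (of C x)) = 0)
    (hcomm : ∀ x : X, x ∉ arrSupp ℬ →
      ∀ r ∈ sB '' (LieAlgebra.derivedSeries C (SubLie C ℬ Rel) 1 : Set (SubLie C ℬ Rel)),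
        ⁅arrMk C 𝒜 Rel (of C x), r⁆ = 0) :
    -- `[ker(π_ℬ'), im(s_ℬ')] = 0`
    (∀ u ∈ LieAlgebra.derivedSeries C (ArrLie C 𝒜 Rel) 1, πB u = 0 →
      ∀ r ∈ sB '' (LieAlgebra.derivedSeries C (SubLie C ℬ Rel) 1 : Set (SubLie C ℬ Rel)),
        ⁅u, r⁆ = 0) ∧
    -- `L' = im(s_ℬ') + ker(π_ℬ')`
    (∀ w ∈ LieAlgebra.derivedSeries C (ArrLie C 𝒜 Rel) 1,
      ∃ r ∈ sB '' (LieAlgebra.derivedSeries C (SubLie C ℬ Rel) 1 : Set (SubLie C ℬ Rel)),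
        ∃ u ∈ LieAlgebra.derivedSeries C (ArrLie C 𝒜 Rel) 1, πB u = 0 ∧ w = r + u) ∧
    -- `im(s_ℬ') ∩ ker(π_ℬ') = 0`
    (∀ w ∈ sB '' (LieAlgebra.derivedSeries C (SubLie C ℬ Rel) 1 : Set (SubLie C ℬ Rel)),
      w ∈ LieAlgebra.derivedSeries C (ArrLie C 𝒜 Rel) 1 → πB w = 0 → w = 0) ∧
    -- `im(s_ℬ')` is a Lie ideal of `L'`
    (∀ w ∈ LieAlgebra.derivedSeries C (ArrLie C 𝒜 Rel) 1,
      ∀ r ∈ sB '' (LieAlgebra.derivedSeries C (SubLie C ℬ Rel) 1 : Set (SubLie C ℬ Rel)),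
        ⁅w, r⁆ ∈ sB '' (LieAlgebra.derivedSeries C (SubLie C ℬ Rel) 1 : Set (SubLie C ℬ Rel))) ∧
    -- `ker(π_ℬ')` is a Lie ideal of `L'`
    (∀ w ∈ LieAlgebra.derivedSeries C (ArrLie C 𝒜 Rel) 1,
      ∀ u ∈ LieAlgebra.derivedSeries C (ArrLie C 𝒜 Rel) 1, πB u = 0 →
        ⁅w, u⁆ ∈ LieAlgebra.derivedSeries C (ArrLie C 𝒜 Rel) 1 ∧ πB ⁅w, u⁆ = 0) :=
  statement12_general 𝒜 Rel ℬ sB hsB πB hπB₁ hπB₂ hcomm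
end

section
/- Let ℬ_1,…,ℬ_k be pairwise disjoint closed sub-arrangements of a set-arrangement 𝒜 on X with ⋃_i ℬ_i = 𝒜, and let L be a Lie algebra of 𝒜. The following conditions are equivalent: 1) [x, im(s_{ℬ_i}')] = 0 for all i = 1,…,k and all x ∈ X \ supp(ℬ_i); 2) im(s_{ℬ_i}') is an ideal in L for all i; 3) L' = Σ_{i=1}^k im(s_{ℬ_i}'); 4) s' is surjective; 5) π' is injective. -/
/-! The structure maps satisfy `π_i ∘ s_i = id`, and for `i ≠ j` the map `π_j ∘ s_i` kills
`L_{ℬ_i}'`: two distinct generators of `supp ℬ_i` never lie in a common member of `ℬ_j`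
(closedness and disjointness), so their images in `L_{ℬ_j}` commute, and a Lie algebra is
abelian modulo any ideal containing the brackets of its generators. Hence `π' ∘ s' = id`, which
gives 4 ⇒ 5, and 5 ⇒ 1 because `⁅x, s_i z⁆ ∈ L'` is killed by every `π_j`. For 1 ⇒ 2, the
normalizer of `im s_i'` is a subalgebra containing all generators. For 2 ⇒ 3, `Σ_i im s_i'` is then
an ideal containing `⁅x, y⁆` for all generators `x, y`: either `{x, y}` lies in a member of some
`ℬ_i`, or the bracket is a defining relation of `L`.
-/

open FreeLieAlgebra

variable (C : Type*) [CommRing C] {X : Type*}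

variable {C}

namespace LieHom

variable {R L L' : Type*} [CommRing R] [LieRing L] [LieAlgebra R L] [LieRing L'] [LieAlgebra R L']

theorem ext_of_lieSpan_eq_top {S : Set L} (hS : LieSubalgebra.lieSpan R L S = ⊤)
    {f g : L →ₗ⁅R⁆ L'} (h : Set.EqOn f g S) : f = g := by
  ext u
  have hu : u ∈ LieSubalgebra.lieSpan R L S := hS ▸ LieSubalgebra.mem_top u
  induction hu using LieSubalgebra.lieSpan_induction with
  | mem x hx => exact h hx
  | zero => simp
  | add x y _ _ hx hy => simp [hx, hy]
  | smul t x _ hx => simp [hx]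
  | lie x y _ _ hx hy => simp [hx, hy]

theorem map_mem_derivedSeries (f : L →ₗ⁅R⁆ L') (k : ℕ) {z : L}
    (hz : z ∈ LieAlgebra.derivedSeries R L k) : f z ∈ LieAlgebra.derivedSeries R L' k :=
  LieIdeal.derivedSeries_map_le (f := f) k (LieIdeal.mem_map hz)

theorem apply_sum_eq_of_biorthogonal {ι : Type*} [Fintype ι] {A : ι → Type*}
    [∀ i, LieRing (A i)] [∀ i, LieAlgebra R (A i)] (s : ∀ i, A i →ₗ⁅R⁆ L)
    (π : ∀ i, L →ₗ⁅R⁆ A i) {N : ∀ i, Set (A i)} (hret : ∀ i, ∀ z ∈ N i, π i (s i z) = z)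
    (hcross : ∀ i j, i ≠ j → ∀ z ∈ N i, π j (s i z) = 0) {z : ∀ i, A i}
    (hz : ∀ i, z i ∈ N i) (j : ι) : π j (∑ i, s i (z i)) = z j := by
  rw [map_sum (π j), Finset.sum_eq_single j (fun i _ hij => hcross i j hij _ (hz i))
    (fun hj => absurd (Finset.mem_univ j) hj)]
  exact hret j _ (hz j)

end LieHom

namespace LieIdeal

variable {R L : Type*} [CommRing R] [LieRing L] [LieAlgebra R L]

theorem lie_mem_of_lieSpan_eq_top {S : Set L} (hS : LieSubalgebra.lieSpan R L S = ⊤)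
    (I : LieIdeal R L) (h : ∀ a ∈ S, ∀ b ∈ S, ⁅a, b⁆ ∈ I) (u v : L) : ⁅u, v⁆ ∈ I := by
  have hgen : ∀ a ∈ S, ∀ v, ⁅a, v⁆ ∈ I := by
    intro a ha v
    have hv : v ∈ LieSubalgebra.lieSpan R L S := hS ▸ LieSubalgebra.mem_top v
    induction hv using LieSubalgebra.lieSpan_induction with
    | mem b hb => exact h a ha b hb
    | zero => simp
    | add x y _ _ hx hy => simpa only [lie_add] using add_mem hx hy
    | smul t x _ hx => simpa only [lie_smul] using SMulMemClass.smul_mem t hx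
    | lie x y _ _ hx hy =>
      rw [leibniz_lie]
      exact add_mem (lie_mem_left R L I _ _ hx) (lie_mem_right R L I _ _ hy)
  have hu : u ∈ LieSubalgebra.lieSpan R L S := hS ▸ LieSubalgebra.mem_top u
  induction hu using LieSubalgebra.lieSpan_induction generalizing v with
  | mem a ha => exact hgen a ha v
  | zero => simp
  | add x y _ _ hx hy => simpa only [add_lie] using add_mem (hx v) (hy v)
  | smul t x _ hx => simpa only [smul_lie] using SMulMemClass.smul_mem t (hx v)
  | lie x y _ _ hx hy =>
    rw [lie_lie]
    exact sub_mem (lie_mem_right R L I _ _ (hy v)) (lie_mem_right R L I _ _ (hx v))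

theorem derivedSeries_one_le_of_lieSpan_eq_top {S : Set L}
    (hS : LieSubalgebra.lieSpan R L S = ⊤) (I : LieIdeal R L)
    (h : ∀ a ∈ S, ∀ b ∈ S, ⁅a, b⁆ ∈ I) : LieAlgebra.derivedSeries R L 1 ≤ I := by
  rw [LieAlgebra.derivedSeries_def, LieAlgebra.derivedSeriesOfIdeal_succ,
    LieAlgebra.derivedSeriesOfIdeal_zero, LieSubmodule.lie_le_iff]
  exact fun u _ v _ => lie_mem_of_lieSpan_eq_top hS I h u v

end LieIdeal

namespace LieAlgebra

variable {R L : Type*} [CommRing R] [LieRing L] [LieAlgebra R L]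

theorem lie_mem_derivedSeries_one (u v : L) : ⁅u, v⁆ ∈ derivedSeries R L 1 := by
  rw [derivedSeries_def, derivedSeriesOfIdeal_succ, derivedSeriesOfIdeal_zero]
  exact LieSubmodule.lie_mem_lie (LieSubmodule.mem_top u) (LieSubmodule.mem_top v)

end LieAlgebra

namespace FreeLieAlgebra

variable {R Y : Type*} [CommRing R]

theorem lieSpan_range_of :
    LieSubalgebra.lieSpan R (FreeLieAlgebra R Y) (Set.range (of R)) = ⊤ := by
  set K := LieSubalgebra.lieSpan R (FreeLieAlgebra R Y) (Set.range (of R))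
  have hK : K.incl.comp (lift R fun y => (⟨of R y, LieSubalgebra.subset_lieSpan ⟨y, rfl⟩⟩ : K)) =
      LieHom.id := hom_ext fun y => by simp
  refine eq_top_iff.mpr fun w _ => ?_
  have hw := LieHom.congr_fun hK w
  rw [LieHom.comp_apply, LieHom.id_apply] at hw
  exact hw ▸ Subtype.prop _

theorem lieSpan_range_quotient_mk_of (I : LieIdeal R (FreeLieAlgebra R Y)) :
    LieSubalgebra.lieSpan R (FreeLieAlgebra R Y ⧸ I)
      (Set.range fun y => LieSubmodule.Quotient.mk (N := I) (of R y)) = ⊤ := by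
  refine eq_top_iff.mpr ?_
  rintro u -
  obtain ⟨w, rfl⟩ := LieSubmodule.Quotient.surjective_mk' I u
  have hw : w ∈ LieSubalgebra.lieSpan R _ (Set.range (of R)) :=
    (lieSpan_range_of (R := R) (Y := Y)) ▸ LieSubalgebra.mem_top w
  induction hw using LieSubalgebra.lieSpan_induction with
  | mem x hx =>
    obtain ⟨y, rfl⟩ := hx
    exact LieSubalgebra.subset_lieSpan ⟨y, rfl⟩
  | zero => exact zero_mem _
  | add x y _ _ hx hy => exact add_mem hx hy
  | smul t x _ hx => exact LieSubalgebra.smul_mem _ t hx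
  | lie x y _ _ hx hy => exact LieSubalgebra.lie_mem _ hx hy

end FreeLieAlgebra

theorem Submodule.exists_sum_of_mem_iSup_map {R P ι : Type*} [Semiring R] [AddCommMonoid P]
    [Module R P] [Fintype ι] {M : ι → Type*} [∀ i, AddCommMonoid (M i)] [∀ i, Module R (M i)]
    (f : ∀ i, M i →ₗ[R] P) (N : ∀ i, Submodule R (M i)) {u : P}
    (hu : u ∈ ⨆ i, (N i).map (f i)) : ∃ z : ∀ i, M i, (∀ i, z i ∈ N i) ∧ u = ∑ i, f i (z i) := by
  have hu' : u ∈ ⨆ i ∈ Finset.univ, (N i).map (f i) := by simpa using hu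
  obtain ⟨μ, rfl⟩ := (Submodule.mem_iSup_finset_iff_exists_sum _ u).mp hu'
  choose z hz hfz using fun i => Submodule.mem_map.mp (μ i).2
  exact ⟨z, hz, Finset.sum_congr rfl fun i _ => (hfz i).symm⟩

section Arrangement

variable {𝒜 : Set (Set X)} {Rel : ∀ A : Set X, Set (FreeLieAlgebra C A)}

theorem arrMk_lie_arrMk_eq_zero {x y : X} (h : ∀ A ∈ 𝒜, ¬({x, y} : Set X) ⊆ A) :
    ⁅arrMk C 𝒜 Rel (of C x), arrMk C 𝒜 Rel (of C y)⁆ = 0 :=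
  (LieSubmodule.Quotient.mk_eq_zero' (N := definingIdeal C 𝒜 Rel)).mpr <|
    LieSubmodule.subset_lieSpan (Set.mem_union_left _ ⟨x, y, h, rfl⟩)

theorem subMk_lie_subMk_eq_zero {ℬ : Set (Set X)} {a b : arrSupp ℬ}
    (h : ∀ B ∈ ℬ, ¬({(a : X), (b : X)} : Set X) ⊆ B) :
    ⁅subMk C ℬ Rel (of C a), subMk C ℬ Rel (of C b)⁆ = 0 :=
  (LieSubmodule.Quotient.mk_eq_zero' (N := subIdeal C ℬ Rel)).mpr <|
    LieSubmodule.subset_lieSpan (Set.mem_union_right _ ⟨a, b, h, rfl⟩)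

theorem IsClosedSub.not_pair_subset_of_disjoint {ℬ ℬ' : Set (Set X)} (hℬ : IsClosedSub 𝒜 ℬ)
    (hℬ' : ℬ' ⊆ 𝒜) (hdisj : ℬ ∩ ℬ' = ∅) {a b : X} (ha : a ∈ arrSupp ℬ) (hb : b ∈ arrSupp ℬ)
    (hab : a ≠ b) : ∀ B ∈ ℬ', ¬({a, b} : Set X) ⊆ B := by
  intro B hB hsub
  have hBℬ : B ∉ ℬ := fun h => (Set.eq_empty_iff_forall_notMem.mp hdisj) B ⟨h, hB⟩
  exact hab (hℬ.2 B (hℬ' hB) hBℬ ⟨hsub (Set.mem_insert a _), ha⟩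
    ⟨hsub (Set.mem_insert_of_mem a rfl), hb⟩)

theorem comp_eq_id_of_generators {ℬ : Set (Set X)} (s : SubLie C ℬ Rel →ₗ⁅C⁆ ArrLie C 𝒜 Rel)
    (π : ArrLie C 𝒜 Rel →ₗ⁅C⁆ SubLie C ℬ Rel)
    (hs : ∀ a : arrSupp ℬ, s (subMk C ℬ Rel (of C a)) = arrMk C 𝒜 Rel (of C (a : X)))
    (hπ : ∀ a : arrSupp ℬ, π (arrMk C 𝒜 Rel (of C (a : X))) = subMk C ℬ Rel (of C a)) :
    π.comp s = LieHom.id := by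
  refine LieHom.ext_of_lieSpan_eq_top (lieSpan_range_quotient_mk_of _) ?_
  rintro _ ⟨a, rfl⟩
  exact (congrArg π (hs a)).trans (hπ a)

theorem derivedSeries_le_ker_comp_of_disjoint {ℬ ℬ' : Set (Set X)} (hℬ : IsClosedSub 𝒜 ℬ)
    (hℬ' : ℬ' ⊆ 𝒜) (hdisj : ℬ ∩ ℬ' = ∅) (s : SubLie C ℬ Rel →ₗ⁅C⁆ ArrLie C 𝒜 Rel)
    (hs : ∀ a : arrSupp ℬ, s (subMk C ℬ Rel (of C a)) = arrMk C 𝒜 Rel (of C (a : X)))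
    (π : ArrLie C 𝒜 Rel →ₗ⁅C⁆ SubLie C ℬ' Rel)
    (hπ₁ : ∀ a : arrSupp ℬ', π (arrMk C 𝒜 Rel (of C (a : X))) = subMk C ℬ' Rel (of C a))
    (hπ₂ : ∀ x : X, x ∉ arrSupp ℬ' → π (arrMk C 𝒜 Rel (of C x)) = 0) :
    LieAlgebra.derivedSeries C (SubLie C ℬ Rel) 1 ≤ (π.comp s).ker := by
  refine LieIdeal.derivedSeries_one_le_of_lieSpan_eq_top (lieSpan_range_quotient_mk_of _) _ ?_
  rintro _ ⟨a, rfl⟩ _ ⟨b, rfl⟩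
  rw [LieHom.mem_ker, LieHom.map_lie]
  change ⁅π (s (subMk C ℬ Rel (of C a))), π (s (subMk C ℬ Rel (of C b)))⁆ = 0
  rw [hs, hs]
  by_cases ha : (a : X) ∈ arrSupp ℬ'
  swap
  · rw [hπ₂ _ ha, zero_lie]
  by_cases hb : (b : X) ∈ arrSupp ℬ'
  swap
  · rw [hπ₂ _ hb, lie_zero]
  rw [hπ₁ ⟨a, ha⟩, hπ₁ ⟨b, hb⟩]
  obtain hab | hab := eq_or_ne (a : X) b
  · simp only [hab, lie_self]
  · exact subMk_lie_subMk_eq_zero (hℬ.not_pair_subset_of_disjoint hℬ' hdisj a.2 b.2 hab)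

theorem lie_mem_image_derivedSeries {ℬ : Set (Set X)} (s : SubLie C ℬ Rel →ₗ⁅C⁆ ArrLie C 𝒜 Rel)
    (hs : ∀ a : arrSupp ℬ, s (subMk C ℬ Rel (of C a)) = arrMk C 𝒜 Rel (of C (a : X)))
    (h : ∀ x : X, x ∉ arrSupp ℬ →
      ∀ r ∈ s '' (LieAlgebra.derivedSeries C (SubLie C ℬ Rel) 1 : Set (SubLie C ℬ Rel)),
        ⁅arrMk C 𝒜 Rel (of C x), r⁆ = 0)
    (u : ArrLie C 𝒜 Rel) :
    ∀ r ∈ s '' (LieAlgebra.derivedSeries C (SubLie C ℬ Rel) 1 : Set (SubLie C ℬ Rel)),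
      ⁅u, r⁆ ∈ s '' (LieAlgebra.derivedSeries C (SubLie C ℬ Rel) 1 : Set (SubLie C ℬ Rel)) := by
  set K := (LieAlgebra.derivedSeries C (SubLie C ℬ Rel) 1).toLieSubalgebra.map s
  suffices hK : K.normalizer = ⊤ from (K.mem_normalizer_iff u).mp (hK ▸ LieSubalgebra.mem_top u)
  rw [eq_top_iff, ← lieSpan_range_quotient_mk_of, LieSubalgebra.lieSpan_le]
  rintro _ ⟨x, rfl⟩
  rw [SetLike.mem_coe, K.mem_normalizer_iff]
  rintro _ ⟨z, hz, rfl⟩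
  change ⁅arrMk C 𝒜 Rel (of C x), s z⁆ ∈ K
  by_cases hx : x ∈ arrSupp ℬ
  · rw [← hs ⟨x, hx⟩, ← LieHom.map_lie]
    exact ⟨_, lie_mem_right C _ _ _ _ hz, rfl⟩
  · rw [h x hx _ ⟨z, hz, rfl⟩]
    exact zero_mem K

theorem derivedSeries_le_iSup_map_derivedSeries {ι : Type*} {ℬ : ι → Set (Set X)}
    (hcover : ⋃ i, ℬ i = 𝒜) (s : ∀ i, SubLie C (ℬ i) Rel →ₗ⁅C⁆ ArrLie C 𝒜 Rel)
    (hs : ∀ i, ∀ a : arrSupp (ℬ i),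
      s i (subMk C (ℬ i) Rel (of C a)) = arrMk C 𝒜 Rel (of C (a : X)))
    (hideal : ∀ i, ∀ u : ArrLie C 𝒜 Rel,
      ∀ r ∈ s i '' (LieAlgebra.derivedSeries C (SubLie C (ℬ i) Rel) 1 : Set (SubLie C (ℬ i) Rel)),
        ⁅u, r⁆ ∈
          s i '' (LieAlgebra.derivedSeries C (SubLie C (ℬ i) Rel) 1 : Set (SubLie C (ℬ i) Rel))) :
    LieSubmodule.toSubmodule (LieAlgebra.derivedSeries C (ArrLie C 𝒜 Rel) 1) ≤
      ⨆ i, Submodule.map (s i).toLinearMap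
        (LieSubmodule.toSubmodule (LieAlgebra.derivedSeries C (SubLie C (ℬ i) Rel) 1)) := by
  let I : ι → LieIdeal C (ArrLie C 𝒜 Rel) := fun i =>
    { Submodule.map (s i).toLinearMap
        (LieSubmodule.toSubmodule (LieAlgebra.derivedSeries C (SubLie C (ℬ i) Rel) 1)) with
      lie_mem := fun hm => hideal i _ _ hm }
  rw [← LieSubmodule.iSup_toSubmodule I, LieSubmodule.toSubmodule_le_toSubmodule]
  refine LieIdeal.derivedSeries_one_le_of_lieSpan_eq_top (lieSpan_range_quotient_mk_of _) _ ?_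
  rintro _ ⟨x, rfl⟩ _ ⟨y, rfl⟩
  change ⁅arrMk C 𝒜 Rel (of C x), arrMk C 𝒜 Rel (of C y)⁆ ∈ ⨆ i, I i
  by_cases hxy : ∃ A ∈ 𝒜, ({x, y} : Set X) ⊆ A
  · obtain ⟨A, hA, hxyA⟩ := hxy
    obtain ⟨i, hAi⟩ := Set.mem_iUnion.mp (hcover ▸ hA)
    have hx : x ∈ arrSupp (ℬ i) := ⟨A, hAi, hxyA (Set.mem_insert x _)⟩
    have hy : y ∈ arrSupp (ℬ i) := ⟨A, hAi, hxyA (Set.mem_insert_of_mem x rfl)⟩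
    rw [← hs i ⟨x, hx⟩, ← hs i ⟨y, hy⟩, ← LieHom.map_lie]
    exact LieSubmodule.mem_iSup_of_mem i ⟨_, LieAlgebra.lie_mem_derivedSeries_one _ _, rfl⟩
  · simp only [not_exists, not_and] at hxy
    rw [arrMk_lie_arrMk_eq_zero hxy]
    exact zero_mem _

end Arrangement

theorem statement15_general {C : Type*} [CommRing C] {X : Type*}
    (𝒜 : Set (Set X)) (Rel : ∀ A : Set X, Set (FreeLieAlgebra C A))
    (k : ℕ) (ℬ : Fin k → Set (Set X))
    (hclosed : ∀ i, IsClosedSub 𝒜 (ℬ i))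
    (hdisj : ∀ i j, i ≠ j → ℬ i ∩ ℬ j = ∅)
    (hcover : ⋃ i, ℬ i = 𝒜)
    (s : ∀ i, SubLie C (ℬ i) Rel →ₗ⁅C⁆ ArrLie C 𝒜 Rel)
    (hs : ∀ i, ∀ a : arrSupp (ℬ i),
      s i (subMk C (ℬ i) Rel (of C a)) = arrMk C 𝒜 Rel (of C (a : X)))
    (π : ∀ i, ArrLie C 𝒜 Rel →ₗ⁅C⁆ SubLie C (ℬ i) Rel)
    (hπ₁ : ∀ i, ∀ a : arrSupp (ℬ i),
      π i (arrMk C 𝒜 Rel (of C (a : X))) = subMk C (ℬ i) Rel (of C a))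
    (hπ₂ : ∀ i, ∀ x : X, x ∉ arrSupp (ℬ i) → π i (arrMk C 𝒜 Rel (of C x)) = 0) :
    List.TFAE [
      -- 1) `[x, im(s_{ℬ_i}')] = 0` for `x ∉ supp ℬ_i`
      ∀ i, ∀ x : X, x ∉ arrSupp (ℬ i) →
        ∀ r ∈ s i ''
          (LieAlgebra.derivedSeries C (SubLie C (ℬ i) Rel) 1 : Set (SubLie C (ℬ i) Rel)),
          ⁅arrMk C 𝒜 Rel (of C x), r⁆ = 0,
      -- 2) `im(s_{ℬ_i}')` is an ideal in `L`
      ∀ i, ∀ u : ArrLie C 𝒜 Rel,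
        ∀ r ∈ s i ''
          (LieAlgebra.derivedSeries C (SubLie C (ℬ i) Rel) 1 : Set (SubLie C (ℬ i) Rel)),
          ⁅u, r⁆ ∈ s i ''
            (LieAlgebra.derivedSeries C (SubLie C (ℬ i) Rel) 1 : Set (SubLie C (ℬ i) Rel)),
      -- 3) `L' = Σ_i im(s_{ℬ_i}')`
      LieSubmodule.toSubmodule (LieAlgebra.derivedSeries C (ArrLie C 𝒜 Rel) 1) =
        ⨆ i, Submodule.map (s i).toLinearMap
          (LieSubmodule.toSubmodule (LieAlgebra.derivedSeries C (SubLie C (ℬ i) Rel) 1)),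
      -- 4) `s'` is surjective
      ∀ u ∈ LieAlgebra.derivedSeries C (ArrLie C 𝒜 Rel) 1,
        ∃ z : ∀ i, SubLie C (ℬ i) Rel,
          (∀ i, z i ∈ LieAlgebra.derivedSeries C (SubLie C (ℬ i) Rel) 1) ∧
          u = ∑ i, s i (z i),
      -- 5) `π'` is injective
      ∀ u ∈ LieAlgebra.derivedSeries C (ArrLie C 𝒜 Rel) 1,
        ∀ v ∈ LieAlgebra.derivedSeries C (ArrLie C 𝒜 Rel) 1,
          (∀ i, π i u = π i v) → u = v] := by
  have hret : ∀ i z, π i (s i z) = z := fun i =>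
    LieHom.congr_fun (comp_eq_id_of_generators (s i) (π i) (hs i) (hπ₁ i))
  have hcross : ∀ i j, i ≠ j → ∀ z ∈ LieAlgebra.derivedSeries C (SubLie C (ℬ i) Rel) 1,
      π j (s i z) = 0 := fun i j hij _ hz =>
    derivedSeries_le_ker_comp_of_disjoint (hclosed i) (hclosed j).1 (hdisj i j hij) (s i) (hs i)
      (π j) (hπ₁ j) (hπ₂ j) hz
  tfae_have 1 → 2 := fun h1 i => lie_mem_image_derivedSeries (s i) (hs i) (h1 i)
  tfae_have 2 → 3 := fun h2 => le_antisymm (derivedSeries_le_iSup_map_derivedSeries hcover s hs h2)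
    (iSup_le fun i => by
      rintro _ ⟨z, hz, rfl⟩
      exact (s i).map_mem_derivedSeries 1 hz)
  tfae_have 3 → 4 := fun h3 u hu =>
    Submodule.exists_sum_of_mem_iSup_map (fun i => (s i).toLinearMap) _ (h3 ▸ hu)
  tfae_have 4 → 5 := by
    intro h4 u hu v hv huv
    obtain ⟨z, hz, hsum⟩ := h4 (u - v) (sub_mem hu hv)
    have hz0 : ∀ j, z j = 0 := fun j => by
      rw [← LieHom.apply_sum_eq_of_biorthogonal s π (fun i z _ => hret i z) hcross hz j, ← hsum,
        map_sub, huv j, sub_self]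
    rw [← sub_eq_zero, hsum]
    simp [hz0]
  tfae_have 5 → 1 := by
    rintro h5 i x hx _ ⟨z, hz, rfl⟩
    refine h5 _ (lie_mem_right C _ _ _ _ ((s i).map_mem_derivedSeries 1 hz)) 0 (zero_mem _)
      fun j => ?_
    rw [map_zero, LieHom.map_lie]
    obtain rfl | hji := eq_or_ne j i
    · rw [hπ₂ j x hx, zero_lie]
    · rw [hcross i j hji.symm z hz, lie_zero]
  tfae_finish

/-- Theorem 3.8 (`\ref{sub}`): for pairwise disjoint closed sub-arrangements `ℬ₁, …, ℬ_k`
covering `𝒜`, the following are equivalent: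
1) `[x, im(s_{ℬ_i}')] = 0` for all `i` and `x ∈ X \ supp ℬ_i`;
2) `im(s_{ℬ_i}')` is an ideal in `L` for all `i`;
3) `L' = Σ_i im(s_{ℬ_i}')`;
4) `s'` is surjective;
5) `π'` is injective. -/
theorem statement15 {C : Type*} [CommRing C] {X : Type*} [Fintype X]
    (𝒜 : Set (Set X)) (Rel : ∀ A : Set X, Set (FreeLieAlgebra C A))
    (h𝒜 : IsSetArrangement 𝒜) (hRel : AdmissibleRel C 𝒜 Rel)
    (k : ℕ) (ℬ : Fin k → Set (Set X))
    (hclosed : ∀ i, IsClosedSub 𝒜 (ℬ i))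
    (hdisj : ∀ i j, i ≠ j → ℬ i ∩ ℬ j = ∅)
    (hcover : ⋃ i, ℬ i = 𝒜)
    (s : ∀ i, SubLie C (ℬ i) Rel →ₗ⁅C⁆ ArrLie C 𝒜 Rel)
    (hs : ∀ i, ∀ a : arrSupp (ℬ i),
      s i (subMk C (ℬ i) Rel (of C a)) = arrMk C 𝒜 Rel (of C (a : X)))
    (π : ∀ i, ArrLie C 𝒜 Rel →ₗ⁅C⁆ SubLie C (ℬ i) Rel)
    (hπ₁ : ∀ i, ∀ a : arrSupp (ℬ i),
      π i (arrMk C 𝒜 Rel (of C (a : X))) = subMk C (ℬ i) Rel (of C a))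
    (hπ₂ : ∀ i, ∀ x : X, x ∉ arrSupp (ℬ i) → π i (arrMk C 𝒜 Rel (of C x)) = 0) :
    List.TFAE [
      -- 1) `[x, im(s_{ℬ_i}')] = 0` for `x ∉ supp ℬ_i`
      ∀ i, ∀ x : X, x ∉ arrSupp (ℬ i) →
        ∀ r ∈ s i ''
          (LieAlgebra.derivedSeries C (SubLie C (ℬ i) Rel) 1 : Set (SubLie C (ℬ i) Rel)),
          ⁅arrMk C 𝒜 Rel (of C x), r⁆ = 0,
      -- 2) `im(s_{ℬ_i}')` is an ideal in `L`
      ∀ i, ∀ u : ArrLie C 𝒜 Rel,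
        ∀ r ∈ s i ''
          (LieAlgebra.derivedSeries C (SubLie C (ℬ i) Rel) 1 : Set (SubLie C (ℬ i) Rel)),
          ⁅u, r⁆ ∈ s i ''
            (LieAlgebra.derivedSeries C (SubLie C (ℬ i) Rel) 1 : Set (SubLie C (ℬ i) Rel)),
      -- 3) `L' = Σ_i im(s_{ℬ_i}')`
      LieSubmodule.toSubmodule (LieAlgebra.derivedSeries C (ArrLie C 𝒜 Rel) 1) =
        ⨆ i, Submodule.map (s i).toLinearMap
          (LieSubmodule.toSubmodule (LieAlgebra.derivedSeries C (SubLie C (ℬ i) Rel) 1)),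
      -- 4) `s'` is surjective
      ∀ u ∈ LieAlgebra.derivedSeries C (ArrLie C 𝒜 Rel) 1,
        ∃ z : ∀ i, SubLie C (ℬ i) Rel,
          (∀ i, z i ∈ LieAlgebra.derivedSeries C (SubLie C (ℬ i) Rel) 1) ∧
          u = ∑ i, s i (z i),
      -- 5) `π'` is injective
      ∀ u ∈ LieAlgebra.derivedSeries C (ArrLie C 𝒜 Rel) 1,
        ∀ v ∈ LieAlgebra.derivedSeries C (ArrLie C 𝒜 Rel) 1,
          (∀ i, π i u = π i v) → u = v] :=
  statement15_general 𝒜 Rel k ℬ hclosed hdisj hcover s hs π hπ₁ hπ₂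
end

section
/- Let ℬ_1,…,ℬ_k be pairwise disjoint closed sub-arrangements of a set-arrangement 𝒜 on X with ⋃_i ℬ_i = 𝒜, and let L be a Lie algebra of 𝒜 such that [x, im(s_{ℬ_i}')] = 0 for all i = 1,…,k and all x ∈ X \ supp(ℬ_i). Then L' = ⊕_{i=1}^k im(s_{ℬ_i}') (internal direct sum), [im(s_{ℬ_i}'), im(s_{ℬ_j}')] = 0 for i ≠ j, and L' is isomorphic as a Lie algebra to the direct product ⊕_{i=1}^k L_{ℬ_i}'. -/
/-!
Killing the generators outside `supp ℬ_i` gives a retraction `p_i : L → L_{ℬ_i}` of `s_i`. It is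
well defined because `ℬ_i` is closed: any other member `A` of `𝒜` meets `supp ℬ_i` in at most one
point, so `F(A)` is sent to an abelian subalgebra and the relations `R_A ⊆ F(A)'` die. For the same
reason, and since the `ℬ_j` are disjoint, `p_i` kills `s_j(L_{ℬ_j}')` for `j ≠ i`.
The hypothesis `[x, im s_i'] = 0` for `x ∉ supp ℬ_i` makes each `im s_i'` an ideal of `L`, and every
bracket of two generators lies in one of them, so `L' = Σ_i im s_i'`. The retractions make this sum
direct; two distinct summands meet in `0`, hence commute, and `⊕_i s_i'` is the isomorphism.
-/

open FreeLieAlgebra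

variable (C : Type*) [CommRing C] {X : Type*}

open scoped DirectSum

section LieGeneral

variable {R : Type*} [CommRing R] {L L₂ : Type*} [LieRing L] [LieAlgebra R L]
  [LieRing L₂] [LieAlgebra R L₂]

theorem LieAlgebra.derivedSeries_one :
    LieAlgebra.derivedSeries R L 1 = ⁅(⊤ : LieIdeal R L), ⊤⁆ :=
  rfl

theorem LieAlgebra.lie_mem_derivedSeries_one_s16 (x y : L) :
    ⁅x, y⁆ ∈ LieAlgebra.derivedSeries R L 1 :=
  LieSubmodule.lie_mem_lie trivial trivial

theorem LieHom.mem_derivedSeries_one (f : L →ₗ⁅R⁆ L₂) {u : L}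
    (hu : u ∈ LieAlgebra.derivedSeries R L 1) : f u ∈ LieAlgebra.derivedSeries R L₂ 1 := by
  suffices LieAlgebra.derivedSeries R L 1 ≤ (LieAlgebra.derivedSeries R L₂ 1).comap f from this hu
  rw [LieAlgebra.derivedSeries_one, LieSubmodule.lie_le_iff]
  intro x _ y _
  rw [LieIdeal.mem_comap, f.map_lie]
  exact LieAlgebra.lie_mem_derivedSeries_one_s16 _ _

theorem LieHom.eqOn_lieSpan {f g : L →ₗ⁅R⁆ L₂} {s : Set L} (h : Set.EqOn f g s) :
    Set.EqOn f g (LieSubalgebra.lieSpan R L s) := by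
  intro x hx
  induction hx using LieSubalgebra.lieSpan_induction with
  | mem x hx => exact h hx
  | zero => simp
  | add x y _ _ hx hy => simp [hx, hy]
  | smul a x _ hx => simp [hx]
  | lie x y _ _ hx hy => simp [hx, hy]

theorem LieHom.ext_of_lieSpan_eq_top_s16 {f g : L →ₗ⁅R⁆ L₂} {s : Set L}
    (hs : LieSubalgebra.lieSpan R L s = ⊤) (h : Set.EqOn f g s) : f = g :=
  LieHom.ext fun x => f.eqOn_lieSpan h (hs ▸ LieSubalgebra.mem_top x)

theorem LieHom.lie_apply_eq_zero_of_lieSpan_eq_top (f : L →ₗ⁅R⁆ L₂) {s : Set L}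
    (hs : LieSubalgebra.lieSpan R L s = ⊤) (h : ∀ a ∈ s, ∀ b ∈ s, ⁅f a, f b⁆ = 0) (u v : L) :
    ⁅f u, f v⁆ = 0 := by
  let K := LieSubalgebra.lieSpan R L₂ (f '' s)
  have hmem (x : L) : f x ∈ K := by
    rw [show K = (⊤ : LieSubalgebra R L).map f by rw [← hs, LieSubalgebra.map_lieSpan]]
    exact ⟨x, trivial, rfl⟩
  have : IsLieAbelian K := by
    rw [LieSubalgebra.isLieAbelian_lieSpan_iff]
    rintro _ ⟨a, ha, rfl⟩ _ ⟨b, hb, rfl⟩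
    exact h a ha b hb
  simpa using congrArg Subtype.val (trivial_lie_zero K K ⟨f u, hmem u⟩ ⟨f v, hmem v⟩)

theorem LieHom.derivedSeries_one_le_ker (f : L →ₗ⁅R⁆ L₂) {s : Set L}
    (hs : LieSubalgebra.lieSpan R L s = ⊤) (h : ∀ a ∈ s, ∀ b ∈ s, ⁅f a, f b⁆ = 0) :
    LieAlgebra.derivedSeries R L 1 ≤ f.ker := by
  rw [LieAlgebra.derivedSeries_one, LieSubmodule.lie_le_iff]
  intro u _ v _
  rw [LieHom.mem_ker, f.map_lie]
  exact f.lie_apply_eq_zero_of_lieSpan_eq_top hs h u v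

theorem lie_mem_of_lieSpan_eq_top {s : Set L} (hs : LieSubalgebra.lieSpan R L s = ⊤)
    {W : Submodule R L} (h : ∀ a ∈ s, ∀ w ∈ W, ⁅a, w⁆ ∈ W) (x : L) {w : L} (hw : w ∈ W) :
    ⁅x, w⁆ ∈ W := by
  have hx : x ∈ LieSubalgebra.lieSpan R L s := hs ▸ LieSubalgebra.mem_top x
  induction hx using LieSubalgebra.lieSpan_induction generalizing w with
  | mem a ha => exact h a ha w hw
  | zero => simp
  | add x y _ _ hx hy => rw [add_lie]; exact add_mem (hx hw) (hy hw)
  | smul a x _ hx => rw [smul_lie]; exact W.smul_mem a (hx hw)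
  | lie x y _ _ hx hy => rw [lie_lie]; exact sub_mem (hx (hy hw)) (hy (hx hw))

def LieIdeal.mkQ (I : LieIdeal R L) : L →ₗ⁅R⁆ L ⧸ I where
  __ := LieSubmodule.Quotient.mk' I
  map_lie' := rfl

theorem LieIdeal.mkQ_surjective (I : LieIdeal R L) : Function.Surjective I.mkQ :=
  LieSubmodule.Quotient.surjective_mk' I

theorem LieIdeal.ker_mkQ (I : LieIdeal R L) : I.mkQ.ker = I := by
  ext x
  exact LieSubmodule.Quotient.mk_eq_zero'

def LieIdeal.liftQ (I : LieIdeal R L) (f : L →ₗ⁅R⁆ L₂) (h : I ≤ f.ker) : L ⧸ I →ₗ⁅R⁆ L₂ where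
  __ := (LieSubmodule.toSubmodule I).liftQ f.toLinearMap fun x hx => h hx
  map_lie' {x y} := by
    induction x using Submodule.Quotient.induction_on
    induction y using Submodule.Quotient.induction_on
    exact f.map_lie _ _

theorem LieIdeal.derivedSeries_one_le_of_lieSpan_eq_top_s16 {s : Set L}
    (hs : LieSubalgebra.lieSpan R L s = ⊤) (I : LieIdeal R L)
    (h : ∀ a ∈ s, ∀ b ∈ s, ⁅a, b⁆ ∈ I) : LieAlgebra.derivedSeries R L 1 ≤ I := by
  refine I.ker_mkQ ▸ I.mkQ.derivedSeries_one_le_ker hs fun a ha b hb => ?_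
  rw [← LieHom.map_lie, ← LieHom.mem_ker, I.ker_mkQ]
  exact h a ha b hb

def LieHom.codRestrict (K : LieSubalgebra R L₂) (f : L →ₗ⁅R⁆ L₂) (h : ∀ x, f x ∈ K) :
    L →ₗ⁅R⁆ K where
  __ := f.toLinearMap.codRestrict K.toSubmodule h
  map_lie' {x y} := Subtype.ext (f.map_lie x y)

theorem FreeLieAlgebra.lieSpan_range_of_s16 (Y : Type*) :
    LieSubalgebra.lieSpan R (FreeLieAlgebra R Y) (Set.range (of R)) = ⊤ := by
  set K := LieSubalgebra.lieSpan R (FreeLieAlgebra R Y) (Set.range (of R))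
  let g : FreeLieAlgebra R Y →ₗ⁅R⁆ K :=
    lift R fun y => ⟨of R y, LieSubalgebra.subset_lieSpan ⟨y, rfl⟩⟩
  have hg : K.incl.comp g = LieHom.id := hom_ext fun y => by simp [g]
  exact eq_top_iff.2 fun u _ => (congrArg (· u) hg : K.incl (g u) = u) ▸ (g u).2

theorem FreeLieAlgebra.lieSpan_range_mk_of {Y : Type*} (I : LieIdeal R (FreeLieAlgebra R Y)) :
    LieSubalgebra.lieSpan R (FreeLieAlgebra R Y ⧸ I)
      (Set.range fun y => LieSubmodule.Quotient.mk (N := I) (of R y)) = ⊤ := by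
  have := LieSubalgebra.map_lieSpan I.mkQ (s := Set.range (of R))
  rw [lieSpan_range_of_s16, ← LieHom.range_eq_map, (LieHom.range_eq_top _).2 I.mkQ_surjective,
    ← Set.range_comp] at this
  exact this.symm

/-- `im(f')` in the paper's notation. -/
abbrev LieHom.derivedImage (f : L →ₗ⁅R⁆ L₂) : Submodule R L₂ :=
  (LieSubmodule.toSubmodule (LieAlgebra.derivedSeries R L 1)).map f.toLinearMap

theorem LieHom.mem_derivedImage {f : L →ₗ⁅R⁆ L₂} {w : L₂} :
    w ∈ f.derivedImage ↔ ∃ u ∈ LieAlgebra.derivedSeries R L 1, f u = w :=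
  Iff.rfl

end LieGeneral

section Retraction

variable {R : Type*} [CommRing R] {L : Type*} [LieRing L] [LieAlgebra R L]
  {ι : Type*} {M : ι → Type*} [∀ i, LieRing (M i)] [∀ i, LieAlgebra R (M i)]
  {s : ∀ i, M i →ₗ⁅R⁆ L} {p : ∀ i, L →ₗ⁅R⁆ M i}

theorem derivedSeries_eq_iSup_derivedImage {S : Set L} (hS : LieSubalgebra.lieSpan R L S = ⊤)
    (hideal : ∀ i (x : L), ∀ w ∈ (s i).derivedImage, ⁅x, w⁆ ∈ (s i).derivedImage)
    (hbr : ∀ a ∈ S, ∀ b ∈ S, ⁅a, b⁆ ∈ ⨆ i, (s i).derivedImage) :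
    LieSubmodule.toSubmodule (LieAlgebra.derivedSeries R L 1) = ⨆ i, (s i).derivedImage := by
  let I : ι → LieIdeal R L := fun i =>
    { (s i).derivedImage with lie_mem := fun {x _} hw => hideal i x _ hw }
  have hI : LieSubmodule.toSubmodule (⨆ i, I i) = ⨆ i, (s i).derivedImage :=
    (LieSubmodule.iSup_toSubmodule I).trans rfl
  refine le_antisymm ?_ (iSup_le fun i => ?_)
  · rw [← hI]
    exact LieIdeal.derivedSeries_one_le_of_lieSpan_eq_top_s16 hS _ (by rwa [← hI] at hbr)
  · rintro _ ⟨u, hu, rfl⟩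
    exact (s i).mem_derivedSeries_one hu

theorem eq_zero_of_sum_eq_zero_of_retraction [Fintype ι] (hps : ∀ i u, p i (s i u) = u)
    (hpsj : Pairwise fun i j => ∀ u ∈ LieAlgebra.derivedSeries R (M j) 1, p i (s j u) = 0)
    {r : ι → L} (hr : ∀ i, r i ∈ (s i).derivedImage) (hsum : ∑ i, r i = 0) (i : ι) :
    r i = 0 := by
  obtain ⟨u, -, hu⟩ := LieHom.mem_derivedImage.1 (hr i)
  have hpi : p i (∑ j, r j) = u := by
    rw [map_sum, Finset.sum_eq_single i (fun j _ hji => ?_) (by simp), ← hu, hps]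
    obtain ⟨v, hv, hvj⟩ := LieHom.mem_derivedImage.1 (hr j)
    rw [← hvj]
    exact hpsj hji.symm v hv
  rw [hsum, map_zero] at hpi
  rw [← hu, ← hpi, map_zero]

theorem lie_eq_zero_of_retraction (hps : ∀ i u, p i (s i u) = u)
    (hpsj : Pairwise fun i j => ∀ u ∈ LieAlgebra.derivedSeries R (M j) 1, p i (s j u) = 0)
    (hideal : ∀ i (x : L), ∀ w ∈ (s i).derivedImage, ⁅x, w⁆ ∈ (s i).derivedImage)
    {i j : ι} (hij : i ≠ j) {r t : L} (hr : r ∈ (s i).derivedImage)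
    (ht : t ∈ (s j).derivedImage) : ⁅r, t⁆ = 0 := by
  -- `⁅r, t⁆` lies in both ideals; `p i` is injective on the first and kills the second.
  obtain ⟨a, -, ha⟩ := LieHom.mem_derivedImage.1 (neg_mem (hideal i t r hr))
  obtain ⟨b, hb, hb'⟩ := LieHom.mem_derivedImage.1 (hideal j r t ht)
  have hrt : ⁅r, t⁆ = s i a := by rw [ha, lie_skew]
  have : a = 0 := by rw [← hps i a, ← hrt, ← hb', hpsj hij b hb]
  rw [hrt, this, map_zero]

theorem nonempty_lieEquiv_directSum_of_retraction [Fintype ι] [DecidableEq ι]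
    (hps : ∀ i u, p i (s i u) = u)
    (hpsj : Pairwise fun i j => ∀ u ∈ LieAlgebra.derivedSeries R (M j) 1, p i (s j u) = 0)
    (hideal : ∀ i (x : L), ∀ w ∈ (s i).derivedImage, ⁅x, w⁆ ∈ (s i).derivedImage)
    (hspan : LieSubmodule.toSubmodule (LieAlgebra.derivedSeries R L 1) =
      ⨆ i, (s i).derivedImage) :
    Nonempty (LieAlgebra.derivedSeries R L 1 ≃ₗ⁅R⁆
      ⨁ i, LieAlgebra.derivedSeries R (M i) 1) := by
  let f i : LieAlgebra.derivedSeries R (M i) 1 →ₗ⁅R⁆ L :=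
    (s i).comp (LieAlgebra.derivedSeries R (M i) 1).incl
  have hf i (u) : f i u ∈ (s i).derivedImage := ⟨u, u.2, rfl⟩
  let Φ := DirectSum.toLieAlgebra L f fun i j hij u v =>
    lie_eq_zero_of_retraction hps hpsj hideal hij (hf i u) (hf j v)
  have hΦof i (u) : Φ (DirectSum.of _ i u) = f i u := by
    rw [← DirectSum.lof_eq_of R]
    exact DirectSum.toModule_lof R (M := fun i => LieAlgebra.derivedSeries R (M i) 1) i u
  have hΦ (x) : Φ x = ∑ i, f i (x i) := by
    conv_lhs => rw [← DirectSum.sum_univ_of x]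
    simp only [map_sum, hΦof]
  have hrange : LieSubmodule.toSubmodule (LieAlgebra.derivedSeries R L 1) ≤
      LinearMap.range Φ.toLinearMap := by
    rw [hspan]
    refine iSup_le fun i => ?_
    rintro _ ⟨u, hu, rfl⟩
    exact ⟨DirectSum.of _ i ⟨u, hu⟩, hΦof i _⟩
  let Ψ := Φ.codRestrict (LieAlgebra.derivedSeries R L 1 : LieSubalgebra R L) fun x => by
    rw [hΦ]
    exact sum_mem fun i _ => (s i).mem_derivedSeries_one (x i).2
  refine ⟨(LieEquiv.ofBijective Ψ ⟨?_, ?_⟩).symm⟩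
  · refine (injective_iff_map_eq_zero Ψ).2 fun x hx => DFinsupp.ext fun i => ?_
    have hsum : ∑ i, f i (x i) = 0 := by rw [← hΦ]; exact congrArg Subtype.val hx
    have hfi := eq_zero_of_sum_eq_zero_of_retraction hps hpsj (fun i => hf i (x i)) hsum i
    exact Subtype.ext (by rw [← hps i (x i)]; exact (congrArg (p i) hfi).trans (map_zero _))
  · intro z
    obtain ⟨x, hx⟩ := hrange z.2
    exact ⟨x, Subtype.ext hx⟩

end Retraction

section Arrangement

variable {C} {𝒜 ℬ ℬ' : Set (Set X)} {Rel : ∀ A : Set X, Set (FreeLieAlgebra C A)}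

theorem arrLie_lieSpan_range_arrMk_of :
    LieSubalgebra.lieSpan C (ArrLie C 𝒜 Rel) (Set.range fun x => arrMk C 𝒜 Rel (of C x)) = ⊤ :=
  lieSpan_range_mk_of _

theorem subLie_lieSpan_range_subMk_of :
    LieSubalgebra.lieSpan C (SubLie C ℬ Rel) (Set.range fun a => subMk C ℬ Rel (of C a)) = ⊤ :=
  lieSpan_range_mk_of _

theorem subMk_eq_zero_of_mem_subRel {u : FreeLieAlgebra C (arrSupp ℬ)}
    (hu : u ∈ subRel C ℬ Rel) : subMk C ℬ Rel u = 0 :=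
  LieSubmodule.Quotient.mk_eq_zero'.2 (LieSubmodule.subset_lieSpan hu)

theorem subProj_of_of_mem {x : X} (hx : x ∈ arrSupp ℬ) :
    subProj C ℬ Rel (of C x) = subMk C ℬ Rel (of C ⟨x, hx⟩) := by
  rw [subProj, lift_of_apply, dif_pos hx]

theorem subProj_of_of_notMem {x : X} (hx : x ∉ arrSupp ℬ) : subProj C ℬ Rel (of C x) = 0 := by
  rw [subProj, lift_of_apply, dif_neg hx]

theorem lie_subProj_of_eq_zero {x y : X} (h : ∀ B ∈ ℬ, ({x, y} : Set X) ⊆ B → x = y) :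
    ⁅subProj C ℬ Rel (of C x), subProj C ℬ Rel (of C y)⁆ = 0 := by
  by_cases hx : x ∈ arrSupp ℬ
  · by_cases hy : y ∈ arrSupp ℬ
    · by_cases hB : ∃ B ∈ ℬ, ({x, y} : Set X) ⊆ B
      · obtain ⟨B, hB, hxy⟩ := hB
        obtain rfl := h B hB hxy
        exact lie_self _
      · rw [subProj_of_of_mem hx, subProj_of_of_mem hy]
        exact subMk_eq_zero_of_mem_subRel
          (Or.inr ⟨⟨x, hx⟩, ⟨y, hy⟩, fun B hB' hxy => hB ⟨B, hB', hxy⟩, rfl⟩)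
    · rw [subProj_of_of_notMem hy, lie_zero]
  · rw [subProj_of_of_notMem hx, zero_lie]

theorem subProj_comp_inclX {A : Set X} (hA : A ∈ ℬ) :
    (subProj C ℬ Rel).comp (inclX C A) =
      (subIdeal C ℬ Rel).mkQ.comp (inclSub C (Set.subset_sUnion_of_mem hA)) :=
  hom_ext fun a => by
    simp only [LieHom.comp_apply, inclX, inclSub, lift_of_apply]
    rw [subProj_of_of_mem ⟨A, hA, a.2⟩]
    rfl

theorem definingIdeal_le_ker_subProj (hℬ : IsClosedSub 𝒜 ℬ) (hRel : AdmissibleRel C 𝒜 Rel) :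
    definingIdeal C 𝒜 Rel ≤ (subProj C ℬ Rel).ker := by
  rw [definingIdeal, LieSubmodule.lieSpan_le]
  rintro _ (⟨x, y, hxy, rfl⟩ | hz)
  · rw [SetLike.mem_coe, LieHom.mem_ker, LieHom.map_lie]
    exact lie_subProj_of_eq_zero fun B hB hB' => (hxy B (hℬ.1 hB) hB').elim
  simp only [Set.mem_iUnion] at hz
  obtain ⟨A, hA, r, hr, rfl⟩ := hz
  rw [SetLike.mem_coe, LieHom.mem_ker, ← LieHom.comp_apply]
  by_cases hAℬ : A ∈ ℬ
  · rw [subProj_comp_inclX hAℬ]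
    exact subMk_eq_zero_of_mem_subRel (Or.inl (Set.mem_iUnion₂.2 ⟨A, hAℬ, r, hr, rfl⟩))
  -- `A` meets `supp ℬ` in at most one point, so the generators of `F(A)` have commuting images.
  refine ((subProj C ℬ Rel).comp (inclX C A)).derivedSeries_one_le_ker (lieSpan_range_of_s16 A)
    ?_ (hRel A hA hr)
  rintro _ ⟨x, rfl⟩ _ ⟨y, rfl⟩
  simp only [LieHom.comp_apply, inclX, lift_of_apply]
  exact lie_subProj_of_eq_zero fun B hB hxy =>
    hℬ.2 A hA hAℬ ⟨x.2, Set.mem_sUnion_of_mem (hxy (by simp)) hB⟩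
      ⟨y.2, Set.mem_sUnion_of_mem (hxy (by simp)) hB⟩

noncomputable def arrProj (hℬ : IsClosedSub 𝒜 ℬ) (hRel : AdmissibleRel C 𝒜 Rel) :
    ArrLie C 𝒜 Rel →ₗ⁅C⁆ SubLie C ℬ Rel :=
  (definingIdeal C 𝒜 Rel).liftQ (subProj C ℬ Rel) (definingIdeal_le_ker_subProj hℬ hRel)

theorem arrProj_arrMk (hℬ : IsClosedSub 𝒜 ℬ) (hRel : AdmissibleRel C 𝒜 Rel)
    (u : FreeLieAlgebra C X) : arrProj hℬ hRel (arrMk C 𝒜 Rel u) = subProj C ℬ Rel u :=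
  rfl

theorem arrProj_apply_of_section (hℬ : IsClosedSub 𝒜 ℬ) (hRel : AdmissibleRel C 𝒜 Rel)
    {s : SubLie C ℬ Rel →ₗ⁅C⁆ ArrLie C 𝒜 Rel}
    (hs : ∀ a : arrSupp ℬ, s (subMk C ℬ Rel (of C a)) = arrMk C 𝒜 Rel (of C (a : X)))
    (u : SubLie C ℬ Rel) : arrProj hℬ hRel (s u) = u := by
  have : (arrProj hℬ hRel).comp s = LieHom.id :=
    LieHom.ext_of_lieSpan_eq_top_s16 subLie_lieSpan_range_subMk_of <| by
      rintro _ ⟨a, rfl⟩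
      rw [LieHom.comp_apply, hs, arrProj_arrMk, subProj_of_of_mem a.2]
      rfl
  exact LieHom.congr_fun this u

theorem arrProj_apply_eq_zero_of_disjoint (hℬ : IsClosedSub 𝒜 ℬ) (hℬ' : IsClosedSub 𝒜 ℬ')
    (hdisj : ℬ ∩ ℬ' = ∅) (hRel : AdmissibleRel C 𝒜 Rel)
    {s' : SubLie C ℬ' Rel →ₗ⁅C⁆ ArrLie C 𝒜 Rel}
    (hs' : ∀ a : arrSupp ℬ', s' (subMk C ℬ' Rel (of C a)) = arrMk C 𝒜 Rel (of C (a : X)))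
    {u : SubLie C ℬ' Rel} (hu : u ∈ LieAlgebra.derivedSeries C (SubLie C ℬ' Rel) 1) :
    arrProj hℬ hRel (s' u) = 0 := by
  refine ((arrProj hℬ hRel).comp s').derivedSeries_one_le_ker
    subLie_lieSpan_range_subMk_of ?_ hu
  rintro _ ⟨a, rfl⟩ _ ⟨b, rfl⟩
  rw [LieHom.comp_apply, LieHom.comp_apply, hs', hs', arrProj_arrMk, arrProj_arrMk]
  -- A member of `ℬ` lies outside `ℬ'`, so it meets `supp ℬ'` in at most one point.
  exact lie_subProj_of_eq_zero fun B hB hab =>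
    hℬ'.2 B (hℬ.1 hB) (fun hB' => Set.eq_empty_iff_forall_notMem.1 hdisj B ⟨hB, hB'⟩)
      ⟨hab (by simp), a.2⟩ ⟨hab (by simp), b.2⟩

theorem lie_mem_derivedImage_of_section {s : SubLie C ℬ Rel →ₗ⁅C⁆ ArrLie C 𝒜 Rel}
    (hs : ∀ a : arrSupp ℬ, s (subMk C ℬ Rel (of C a)) = arrMk C 𝒜 Rel (of C (a : X)))
    (hcomm : ∀ x : X, x ∉ arrSupp ℬ →
      ∀ r ∈ s '' (LieAlgebra.derivedSeries C (SubLie C ℬ Rel) 1 : Set (SubLie C ℬ Rel)),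
        ⁅arrMk C 𝒜 Rel (of C x), r⁆ = 0)
    (x : ArrLie C 𝒜 Rel) {w : ArrLie C 𝒜 Rel} (hw : w ∈ s.derivedImage) :
    ⁅x, w⁆ ∈ s.derivedImage := by
  refine lie_mem_of_lieSpan_eq_top arrLie_lieSpan_range_arrMk_of ?_ x hw
  rintro _ ⟨y, rfl⟩ _ hw
  obtain ⟨u, hu, rfl⟩ := LieHom.mem_derivedImage.1 hw
  change ⁅arrMk C 𝒜 Rel (of C y), s u⁆ ∈ s.derivedImage
  by_cases hy : y ∈ arrSupp ℬ
  · rw [← hs ⟨y, hy⟩, ← s.map_lie]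
    exact ⟨_, (LieAlgebra.derivedSeries C (SubLie C ℬ Rel) 1).lie_mem hu, rfl⟩
  · rw [hcomm y hy _ ⟨u, hu, rfl⟩]
    exact zero_mem _

theorem lie_arrMk_of_mem_iSup_derivedImage {ι : Type*} {ℬ : ι → Set (Set X)}
    (hcover : ⋃ i, ℬ i = 𝒜) {s : ∀ i, SubLie C (ℬ i) Rel →ₗ⁅C⁆ ArrLie C 𝒜 Rel}
    (hs : ∀ i, ∀ a : arrSupp (ℬ i),
      s i (subMk C (ℬ i) Rel (of C a)) = arrMk C 𝒜 Rel (of C (a : X)))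
    (x y : X) : ⁅arrMk C 𝒜 Rel (of C x), arrMk C 𝒜 Rel (of C y)⁆ ∈ ⨆ i, (s i).derivedImage := by
  by_cases h : ∃ A ∈ 𝒜, ({x, y} : Set X) ⊆ A
  · obtain ⟨A, hA, hxy⟩ := h
    obtain ⟨i, hAi⟩ := Set.mem_iUnion.1 (hcover ▸ hA)
    have hx : x ∈ arrSupp (ℬ i) := Set.mem_sUnion_of_mem (hxy (by simp)) hAi
    have hy : y ∈ arrSupp (ℬ i) := Set.mem_sUnion_of_mem (hxy (by simp)) hAi
    refine Submodule.mem_iSup_of_mem i ⟨_, LieAlgebra.lie_mem_derivedSeries_one_s16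
      (subMk C (ℬ i) Rel (of C ⟨x, hx⟩)) (subMk C (ℬ i) Rel (of C ⟨y, hy⟩)), ?_⟩
    rw [LieHom.coe_toLinearMap, (s i).map_lie, hs, hs]
  · have : arrMk C 𝒜 Rel ⁅of C x, of C y⁆ = 0 :=
      LieSubmodule.Quotient.mk_eq_zero'.2 <| LieSubmodule.subset_lieSpan <|
        Or.inl ⟨x, y, fun A hA hxy => h ⟨A, hA, hxy⟩, rfl⟩
    change arrMk C 𝒜 Rel ⁅of C x, of C y⁆ ∈ _
    rw [this]
    exact zero_mem _

end Arrangement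

theorem statement16_general {C : Type*} [CommRing C] {X : Type*}
    (𝒜 : Set (Set X)) (Rel : ∀ A : Set X, Set (FreeLieAlgebra C A))
    (hRel : AdmissibleRel C 𝒜 Rel)
    (k : ℕ) (ℬ : Fin k → Set (Set X))
    (hclosed : ∀ i, IsClosedSub 𝒜 (ℬ i))
    (hdisj : ∀ i j, i ≠ j → ℬ i ∩ ℬ j = ∅)
    (hcover : ⋃ i, ℬ i = 𝒜)
    (s : ∀ i, SubLie C (ℬ i) Rel →ₗ⁅C⁆ ArrLie C 𝒜 Rel)
    (hs : ∀ i, ∀ a : arrSupp (ℬ i),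
      s i (subMk C (ℬ i) Rel (of C a)) = arrMk C 𝒜 Rel (of C (a : X)))
    (hcomm : ∀ i, ∀ x : X, x ∉ arrSupp (ℬ i) →
      ∀ r ∈ s i ''
        (LieAlgebra.derivedSeries C (SubLie C (ℬ i) Rel) 1 : Set (SubLie C (ℬ i) Rel)),
        ⁅arrMk C 𝒜 Rel (of C x), r⁆ = 0) :
    -- `L' = Σ_i im(s_{ℬ_i}')` …
    (LieSubmodule.toSubmodule (LieAlgebra.derivedSeries C (ArrLie C 𝒜 Rel) 1) =
      ⨆ i, Submodule.map (s i).toLinearMap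
        (LieSubmodule.toSubmodule (LieAlgebra.derivedSeries C (SubLie C (ℬ i) Rel) 1))) ∧
    -- … and the sum is direct
    (∀ r : Fin k → ArrLie C 𝒜 Rel,
      (∀ i, r i ∈ s i ''
        (LieAlgebra.derivedSeries C (SubLie C (ℬ i) Rel) 1 : Set (SubLie C (ℬ i) Rel))) →
      ∑ i, r i = 0 → ∀ i, r i = 0) ∧
    -- `[im(s_{ℬ_i}'), im(s_{ℬ_j}')] = 0` for `i ≠ j`
    (∀ i j, i ≠ j →
      ∀ r ∈ s i ''
        (LieAlgebra.derivedSeries C (SubLie C (ℬ i) Rel) 1 : Set (SubLie C (ℬ i) Rel)),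
      ∀ t ∈ s j ''
        (LieAlgebra.derivedSeries C (SubLie C (ℬ j) Rel) 1 : Set (SubLie C (ℬ j) Rel)),
        ⁅r, t⁆ = 0) ∧
    -- `L' ≅ ⊕_i L_{ℬ_i}'` as Lie algebras
    Nonempty (↥(LieAlgebra.derivedSeries C (ArrLie C 𝒜 Rel) 1) ≃ₗ⁅C⁆
      (⨁ i, ↥(LieAlgebra.derivedSeries C (SubLie C (ℬ i) Rel) 1))) := by
  have hps i := arrProj_apply_of_section (hclosed i) hRel (hs i)
  have hpsj : Pairwise fun i j => ∀ u ∈ LieAlgebra.derivedSeries C (SubLie C (ℬ j) Rel) 1,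
      arrProj (hclosed i) hRel (s j u) = 0 := fun i j hij _ hu =>
    arrProj_apply_eq_zero_of_disjoint (hclosed i) (hclosed j) (hdisj i j hij) hRel (hs j) hu
  have hideal i := lie_mem_derivedImage_of_section (hs i) (hcomm i)
  have hspan := derivedSeries_eq_iSup_derivedImage arrLie_lieSpan_range_arrMk_of hideal <| by
    rintro _ ⟨x, rfl⟩ _ ⟨y, rfl⟩
    exact lie_arrMk_of_mem_iSup_derivedImage hcover hs x y
  exact ⟨hspan, fun r hr => eq_zero_of_sum_eq_zero_of_retraction hps hpsj hr,
    fun i j hij r hr t ht => lie_eq_zero_of_retraction hps hpsj hideal hij hr ht,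
    nonempty_lieEquiv_directSum_of_retraction hps hpsj hideal hspan⟩

/-- If `[x, im(s_{ℬ_i}')] = 0` for all `i` and `x ∈ X \ supp ℬ_i`, then
`L' = ⊕_i im(s_{ℬ_i}')` (internal direct sum), `[im(s_{ℬ_i}'), im(s_{ℬ_j}')] = 0` for
`i ≠ j`, and `L'` is isomorphic as a Lie algebra to the direct product `⊕_i L_{ℬ_i}'`. -/
theorem statement16 {C : Type*} [CommRing C] {X : Type*} [Fintype X]
    (𝒜 : Set (Set X)) (Rel : ∀ A : Set X, Set (FreeLieAlgebra C A))
    (h𝒜 : IsSetArrangement 𝒜) (hRel : AdmissibleRel C 𝒜 Rel)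
    (k : ℕ) (ℬ : Fin k → Set (Set X))
    (hclosed : ∀ i, IsClosedSub 𝒜 (ℬ i))
    (hdisj : ∀ i j, i ≠ j → ℬ i ∩ ℬ j = ∅)
    (hcover : ⋃ i, ℬ i = 𝒜)
    (s : ∀ i, SubLie C (ℬ i) Rel →ₗ⁅C⁆ ArrLie C 𝒜 Rel)
    (hs : ∀ i, ∀ a : arrSupp (ℬ i),
      s i (subMk C (ℬ i) Rel (of C a)) = arrMk C 𝒜 Rel (of C (a : X)))
    (hcomm : ∀ i, ∀ x : X, x ∉ arrSupp (ℬ i) →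
      ∀ r ∈ s i ''
        (LieAlgebra.derivedSeries C (SubLie C (ℬ i) Rel) 1 : Set (SubLie C (ℬ i) Rel)),
        ⁅arrMk C 𝒜 Rel (of C x), r⁆ = 0) :
    -- `L' = Σ_i im(s_{ℬ_i}')` …
    (LieSubmodule.toSubmodule (LieAlgebra.derivedSeries C (ArrLie C 𝒜 Rel) 1) =
      ⨆ i, Submodule.map (s i).toLinearMap
        (LieSubmodule.toSubmodule (LieAlgebra.derivedSeries C (SubLie C (ℬ i) Rel) 1))) ∧
    -- … and the sum is direct
    (∀ r : Fin k → ArrLie C 𝒜 Rel,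
      (∀ i, r i ∈ s i ''
        (LieAlgebra.derivedSeries C (SubLie C (ℬ i) Rel) 1 : Set (SubLie C (ℬ i) Rel))) →
      ∑ i, r i = 0 → ∀ i, r i = 0) ∧
    -- `[im(s_{ℬ_i}'), im(s_{ℬ_j}')] = 0` for `i ≠ j`
    (∀ i j, i ≠ j →
      ∀ r ∈ s i ''
        (LieAlgebra.derivedSeries C (SubLie C (ℬ i) Rel) 1 : Set (SubLie C (ℬ i) Rel)),
      ∀ t ∈ s j ''
        (LieAlgebra.derivedSeries C (SubLie C (ℬ j) Rel) 1 : Set (SubLie C (ℬ j) Rel)),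
        ⁅r, t⁆ = 0) ∧
    -- `L' ≅ ⊕_i L_{ℬ_i}'` as Lie algebras
    Nonempty (↥(LieAlgebra.derivedSeries C (ArrLie C 𝒜 Rel) 1) ≃ₗ⁅C⁆
      (⨁ i, ↥(LieAlgebra.derivedSeries C (SubLie C (ℬ i) Rel) 1))) :=
  statement16_general 𝒜 Rel hRel k ℬ hclosed hdisj hcover s hs hcomm
end
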